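/- Let z ∈ ℝ^d with ‖z‖₂ = 1 and r ∈ ℝ^d. Then inf over y in the closed Euclidean unit ball of ( −⟨y, z⟩ + ‖(r + z) − y‖₂ ) is at least min{1, ‖r‖₂²}/8 − 1. -/

import Mathlib

/-!
Write `u = y - z`. Since `‖y‖ ≤ 1 = ‖z‖`, polarization gives `-⟪y, z⟫ ≥ ‖u‖² / 2 - 1`, and
`(r + z) - y = r - u`. So it suffices that `‖u‖² / 2 + ‖r - u‖ ≥ min 1 ‖r‖² / 8` for every `u`:
with `m = min 1 ‖r‖ ≤ ‖u‖ + ‖r - u‖`, either `‖u‖ ≥ m / 2` or `‖r - u‖ ≥ m / 2 ≥ m² / 2`.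
-/

open RealInnerProductSpace

lemma min_one_sq_div_eight_le {R a s : ℝ} (hR : 0 ≤ R) (ha : 0 ≤ a) (hs : 0 ≤ s)
    (h : R ≤ a + s) : min 1 (R ^ 2) / 8 ≤ a ^ 2 / 2 + s := by
  set m := min 1 R with hm
  have hm0 : 0 ≤ m := le_min zero_le_one hR
  have hm1 : m ≤ 1 := min_le_left _ _
  have hmas : m ≤ a + s := (min_le_right _ _).trans h
  have hsq : min 1 (R ^ 2) = m ^ 2 := by
    rcases le_total 1 R with h1 | h1
    · rw [hm, min_eq_left h1, min_eq_left (one_le_pow₀ h1), one_pow]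
    · rw [hm, min_eq_right h1, min_eq_right (pow_le_one₀ hR h1)]
  rw [hsq]
  rcases le_total (m / 2) a with ha2 | ha2 <;> nlinarith

lemma min_one_norm_sq_div_eight_le {E : Type*} [SeminormedAddCommGroup E] (r u : E) :
    min 1 (‖r‖ ^ 2) / 8 ≤ ‖u‖ ^ 2 / 2 + ‖r - u‖ :=
  min_one_sq_div_eight_le (norm_nonneg r) (norm_nonneg u) (norm_nonneg _)
    (norm_le_insert' r u)

lemma norm_sub_sq_div_two_sub_le_neg_inner {E : Type*} [NormedAddCommGroup E]
    [InnerProductSpace ℝ E] {y z : E} (hyz : ‖y‖ ≤ ‖z‖) :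
    ‖y - z‖ ^ 2 / 2 - ‖z‖ ^ 2 ≤ -⟪y, z⟫ := by
  have hsq : ‖y‖ ^ 2 ≤ ‖z‖ ^ 2 := pow_le_pow_left₀ (norm_nonneg y) hyz 2
  rw [norm_sub_sq_real]
  linarith

/-- For `‖z‖ = 1` and any `r`,
`inf_{‖y‖ ≤ 1} (−⟨y, z⟩ + ‖(r + z) − y‖) ≥ min {1, ‖r‖²}/8 − 1`. -/
theorem ext_linear_loss_quadratic_growth
    (d : ℕ) (z r : EuclideanSpace ℝ (Fin d)) (hz : ‖z‖ = 1) :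
    min 1 (‖r‖ ^ 2) / 8 - 1 ≤
      sInf ((fun y => -⟪y, z⟫ + ‖(r + z) - y‖) ''
        (Metric.closedBall (0 : EuclideanSpace ℝ (Fin d)) 1)) := by
  refine le_csInf ⟨_, 0, Metric.mem_closedBall_self zero_le_one, rfl⟩ ?_
  rintro _ ⟨y, hy, rfl⟩
  have hy1 : ‖y‖ ≤ ‖z‖ := by rwa [hz, ← mem_closedBall_zero_iff]
  have hinner := norm_sub_sq_div_two_sub_le_neg_inner hy1
  have hgrowth := min_one_norm_sq_div_eight_le r (y - z)
  have hrw : (r + z) - y = r - (y - z) := by abel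
  rw [hz, one_pow] at hinner
  simp only [hrw]
  linarith
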